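/- For all integers p ≥ 2, n ≥ 0, k ≥ 1, d ≥ 1, the following iterative formula holds: O(p, n, k, d) = Σ_{j=1}^{d−1} Σ_{i=k}^{n} O(p−1, n, i, d−j) · O(p, i−1, k−1, j). -/
import Mathlib


/-- The Macaulay bound `a^⟨t⟩`: writing the (unique, greedy) binomial expansion
`a = C(k(t),t) + C(k(t-1),t-1) + ⋯ + C(k(j),j)` with `k(t) > ⋯ > k(j) ≥ j ≥ 1`,
`macaulay t a = C(k(t)+1,t+1) + C(k(t-1)+1,t) + ⋯ + C(k(j)+1,j+1)`.
(The value at `t = 0` is irrelevant for the definitions below.) -/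
def macaulay : ℕ → ℕ → ℕ
  | 0, a => a
  | t+1, a =>
    if a = 0 then 0
    else
      Nat.choose (Nat.findGreatest (fun m => Nat.choose m (t+1) ≤ a) (a + t + 1) + 1) (t+2)
        + macaulay t (a - Nat.choose
            (Nat.findGreatest (fun m => Nat.choose m (t+1) ≤ a) (a + t + 1)) (t+1))

/-- A finite O-sequence `(a_0, a_1, …, a_s)`, encoded as a nonempty list of
positive integers with `a_0 = 1` and `a_{t+1} ≤ a_t^⟨t⟩` for all `1 ≤ t ≤ s-1`. -/
def IsOSeq (l : List ℕ) : Prop :=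
  l ≠ [] ∧ (∀ x ∈ l, 0 < x) ∧ l.getD 0 0 = 1 ∧
    ∀ t : ℕ, 1 ≤ t → t + 1 < l.length → l.getD (t+1) 0 ≤ macaulay t (l.getD t 0)

/-- `numOSeq d` = the number `O_d` of finite O-sequences of multiplicity `d`. -/
noncomputable def numOSeq (d : ℕ) : ℕ := {l : List ℕ | IsOSeq l ∧ l.sum = d}.ncard

/-- `numASeq d` = the number `A_d` of finite O-sequences of multiplicity `d`
whose last entry is strictly greater than `1`. -/
noncomputable def numASeq (d : ℕ) : ℕ :=
  {l : List ℕ | IsOSeq l ∧ l.sum = d ∧ 1 < l.getLastD 0}.ncard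

/-- `numOCond p n k d` = the number `O(p,n,k,d)` of finite O-sequences
`(a_0,…,a_s)` of multiplicity `d` with `s ≤ n`, `a_i = C(p-1+i, i)` for all
`0 ≤ i ≤ k` (in particular `s ≥ k`), and `a_i < C(p-1+i, i)` for `k < i ≤ s`. -/
noncomputable def numOCond (p n k d : ℕ) : ℕ :=
  {l : List ℕ | IsOSeq l ∧ l.sum = d ∧ l.length - 1 ≤ n ∧ k ≤ l.length - 1 ∧
    (∀ i ≤ k, l.getD i 0 = Nat.choose (p - 1 + i) i) ∧
    (∀ i : ℕ, k < i → i < l.length → l.getD i 0 < Nat.choose (p - 1 + i) i)}.ncard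

lemma macaulay_zero_right (t : ℕ) : macaulay t 0 = 0 := by cases t <;> simp [macaulay]

lemma le_choose_add (k : ℕ) : ∀ n, k + 1 ≤ n → n ≤ n.choose (k+1) + k := by
  intro n
  induction n with
  | zero => intro h; omega
  | succ n ih =>
    intro h
    rcases Nat.lt_or_ge (k+1) (n+1) with h' | h'
    · have hkn : k + 1 ≤ n := by omega
      have h1 : (n+1).choose (k+1) = n.choose k + n.choose (k+1) := Nat.choose_succ_succ n k
      have h2 : 0 < n.choose k := Nat.choose_pos (by omega)
      have := ih hkn
      omega
    · have he : k + 1 = n + 1 := by omega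
      have : 0 < (n+1).choose (k+1) := Nat.choose_pos (by omega)
      omega

lemma findGreatest_choose (t m v : ℕ) (hm : t + 1 ≤ m) (hv : v < Nat.choose m t) :
    Nat.findGreatest (fun x => Nat.choose x (t+1) ≤ Nat.choose m (t+1) + v)
      (Nat.choose m (t+1) + v + t + 1) = m := by
  have hmb : m ≤ Nat.choose m (t+1) + v + t + 1 := by
    have := le_choose_add t m hm; omega
  have hPm : Nat.choose m (t+1) ≤ Nat.choose m (t+1) + v := Nat.le_add_right _ _
  apply le_antisymm
  · by_contra hlt
    push_neg at hlt
    have hG := Nat.findGreatest_spec (P := fun x => Nat.choose x (t+1) ≤ Nat.choose m (t+1) + v)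
      hmb hPm
    have h1 : Nat.choose (m+1) (t+1) ≤ Nat.choose (Nat.findGreatest _ _) (t+1) :=
      Nat.choose_le_choose _ hlt
    have h2 : Nat.choose (m+1) (t+1) = Nat.choose m t + Nat.choose m (t+1) :=
      Nat.choose_succ_succ m t
    omega
  · exact Nat.le_findGreatest hmb hPm

lemma macaulay_succ_eq (t m v : ℕ) (hm : t + 1 ≤ m) (hv : v < Nat.choose m t) :
    macaulay (t+1) (Nat.choose m (t+1) + v) = Nat.choose (m+1) (t+2) + macaulay t v := by
  have ha : Nat.choose m (t+1) + v ≠ 0 := by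
    have : 0 < Nat.choose m (t+1) := Nat.choose_pos hm
    omega
  rw [macaulay, if_neg ha, findGreatest_choose t m v hm hv, Nat.add_sub_cancel_left]

lemma macaulay_choose (t m : ℕ) (h : t + 1 ≤ m) :
    macaulay (t+1) (Nat.choose m (t+1)) = Nat.choose (m+1) (t+2) := by
  have := macaulay_succ_eq t m 0 h (Nat.choose_pos (by omega))
  simpa [macaulay_zero_right] using this

lemma exists_interval (t a : ℕ) (ha : 0 < a) :
    ∃ G, t + 1 ≤ G ∧ Nat.choose G (t+1) ≤ a ∧ a < Nat.choose (G+1) (t+1) := by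
  set P : ℕ → Prop := fun m => Nat.choose m (t+1) ≤ a with hP
  have : DecidablePred P := fun m => by unfold P; infer_instance
  set G := Nat.findGreatest P (a + t + 1) with hG
  have hP1 : P (t+1) := by simp [P, Nat.choose_self]; omega
  have hGe : t + 1 ≤ G := Nat.le_findGreatest (by omega) hP1
  have hPG : P G := Nat.findGreatest_spec (m := t+1) (by omega) hP1
  refine ⟨G, hGe, hPG, ?_⟩
  rcases Nat.lt_or_ge (a + t + 1) (G + 1) with hb | hb
  · -- G = a + t + 1, contradiction
    have hGle : G ≤ a + t + 1 := Nat.findGreatest_le _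
    have hGeq : G = a + t + 1 := by omega
    have hle : G ≤ Nat.choose G (t+1) + t := le_choose_add t G hGe
    have hle2 : Nat.choose G (t+1) ≤ a := hPG
    omega
  · have := Nat.findGreatest_is_greatest (k := G+1) (P := P) (by omega) hb
    simp only [P] at this
    omega

lemma macaulay_strictMono (t : ℕ) : StrictMono (macaulay t) := by
  induction t with
  | zero =>
    intro a b h; simpa [macaulay] using h
  | succ t ih =>
    apply strictMono_nat_of_lt_succ
    intro a
    rcases Nat.eq_zero_or_pos a with rfl | ha
    · rw [macaulay_zero_right]
      have h1 : macaulay (t+1) (Nat.choose (t+1) (t+1) + 0)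
          = Nat.choose (t+2) (t+2) + macaulay t 0 :=
        macaulay_succ_eq t (t+1) 0 le_rfl (Nat.choose_pos (by omega))
      simp only [Nat.choose_self, macaulay_zero_right, Nat.add_zero] at h1
      rw [show (0:ℕ)+1 = 1 from rfl, h1]
      omega
    · obtain ⟨G, hG1, hG2, hG3⟩ := exists_interval t a ha
      have hpas : Nat.choose (G+1) (t+1) = Nat.choose G t + Nat.choose G (t+1) :=
        Nat.choose_succ_succ G t
      set w := a - Nat.choose G (t+1) with hw
      have haw : a = Nat.choose G (t+1) + w := by omega
      have hwlt : w < Nat.choose G t := by omega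
      have e1 : macaulay (t+1) a = Nat.choose (G+1) (t+2) + macaulay t w := by
        rw [haw]; exact macaulay_succ_eq t G w hG1 hwlt
      rcases Nat.lt_or_ge (w+1) (Nat.choose G t) with hcase | hcase
      · have e2 : macaulay (t+1) (a+1) = Nat.choose (G+1) (t+2) + macaulay t (w+1) := by
          rw [show a+1 = Nat.choose G (t+1) + (w+1) by omega]
          exact macaulay_succ_eq t G (w+1) hG1 hcase
        have := ih (show w < w + 1 by omega)
        omega
      · have hw1 : w + 1 = Nat.choose G t := by omega
        have e2 : macaulay (t+1) (a+1) = Nat.choose (G+2) (t+2) := by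
          rw [show a + 1 = Nat.choose (G+1) (t+1) by omega]
          exact macaulay_choose t (G+1) (by omega)
        have hlast : macaulay t w < Nat.choose (G+1) (t+1) := by
          cases t with
          | zero =>
            have h0 : Nat.choose G 0 = 1 := Nat.choose_zero_right G
            have hw0 : w = 0 := by omega
            have : 0 < Nat.choose (G+1) 1 := Nat.choose_pos (by omega)
            simpa [macaulay, hw0] using this
          | succ u =>
            have h1 : macaulay (u+1) w < macaulay (u+1) (Nat.choose G (u+1)) :=
              ih (by omega)
            rwa [macaulay_choose u G (by omega)] at h1
        have hpas2 : Nat.choose (G+2) (t+2) = Nat.choose (G+1) (t+1) + Nat.choose (G+1) (t+2) :=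
          Nat.choose_succ_succ (G+1) (t+1)
        omega

lemma macaulay_mono (t : ℕ) {a b : ℕ} (h : a ≤ b) : macaulay t a ≤ macaulay t b :=
  (macaulay_strictMono t).monotone h

lemma macaulay_key (t m v : ℕ) (hm : t + 2 ≤ m) (hv : v ≤ Nat.choose m (t+1)) :
    macaulay (t+2) (Nat.choose m (t+2) + v) = Nat.choose (m+1) (t+3) + macaulay (t+1) v := by
  rcases Nat.lt_or_ge v (Nat.choose m (t+1)) with h | h
  · exact macaulay_succ_eq (t+1) m v hm h
  · have hv' : v = Nat.choose m (t+1) := by omega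
    subst hv'
    have h1 : Nat.choose m (t+2) + Nat.choose m (t+1) = Nat.choose (m+1) (t+2) := by
      have h : Nat.choose (m+1) (t+2) = Nat.choose m (t+1) + Nat.choose m (t+2) :=
        Nat.choose_succ_succ m (t+1)
      omega
    rw [h1, macaulay_choose (t+1) (m+1) (by omega), macaulay_choose t m (by omega)]
    have h2 : Nat.choose (m+1+1) (t+1+2) = Nat.choose (m+1) (t+2) + Nat.choose (m+1) (t+3) :=
      Nat.choose_succ_succ (m+1) (t+2)
    omega

/-! ### List helpers -/

lemma getD_range_map (f : ℕ → ℕ) (n m : ℕ) :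
    ((List.range n).map f).getD m 0 = if m < n then f m else 0 := by
  split_ifs with h
  · rw [List.getD_eq_getElem?_getD, List.getElem?_map, List.getElem?_range h]
    rfl
  · apply List.getD_eq_default
    simpa using h

lemma sum_getD (l : List ℕ) : l.sum = ∑ m ∈ Finset.range l.length, l.getD m 0 := by
  induction l with
  | nil => simp
  | cons x l ih => simp [Finset.sum_range_succ', ih, add_comm]

lemma sum_range_map (f : ℕ → ℕ) (n : ℕ) :
    ((List.range n).map f).sum = ∑ m ∈ Finset.range n, f m := by
  induction n with
  | zero => simp
  | succ n ih => rw [List.range_succ]; simp [Finset.sum_range_succ, ih]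

lemma list_ext_getD (l l' : List ℕ) (hlen : l.length = l'.length)
    (h : ∀ m < l.length, l.getD m 0 = l'.getD m 0) : l = l' := by
  apply List.ext_getElem hlen
  intro m h1 h2
  have := h m h1
  rwa [List.getD_eq_getElem l 0 h1, List.getD_eq_getElem l' 0 h2] at this

lemma getD_pos_of_mem {l : List ℕ} (hpos : ∀ x ∈ l, 0 < x) {m : ℕ} (hm : m < l.length) :
    0 < l.getD m 0 := by
  rw [List.getD_eq_getElem l 0 hm]
  exact hpos _ (List.getElem_mem hm)

lemma finite_bdd_lists (N d : ℕ) : {l : List ℕ | l.length ≤ N ∧ ∀ x ∈ l, x ≤ d}.Finite := by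
  induction N with
  | zero =>
    apply Set.Finite.subset (Set.finite_singleton ([] : List ℕ))
    rintro l ⟨h1, -⟩
    simp [List.length_eq_zero_iff.mp (Nat.le_zero.mp h1)]
  | succ N ih =>
    apply Set.Finite.subset
      (Set.Finite.insert []
        (Set.Finite.image (fun y : ℕ × List ℕ => y.1 :: y.2)
          (Set.Finite.prod (Set.finite_Iic d) ih)))
    rintro l ⟨h1, h2⟩
    cases l with
    | nil => exact Set.mem_insert _ _
    | cons x l =>
      apply Set.mem_insert_of_mem
      refine ⟨(x, l), ⟨?_, ?_, ?_⟩, rfl⟩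
      · exact h2 x (by simp)
      · simpa using h1
      · exact fun y hy => h2 y (by simp [hy])

/-! ### The sets -/

def Sset (p n k d : ℕ) : Set (List ℕ) :=
  {l : List ℕ | IsOSeq l ∧ l.sum = d ∧ l.length - 1 ≤ n ∧ k ≤ l.length - 1 ∧
    (∀ i ≤ k, l.getD i 0 = Nat.choose (p - 1 + i) i) ∧
    (∀ i : ℕ, k < i → i < l.length → l.getD i 0 < Nat.choose (p - 1 + i) i)}

def glue : List ℕ × List ℕ → List ℕ :=
  fun bc => (List.range bc.1.length).map (fun m => bc.1.getD m 0 + (0 :: bc.2).getD m 0)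

lemma glue_length (b c : List ℕ) : (glue (b, c)).length = b.length := by
  simp [glue]

lemma glue_getD (b c : List ℕ) (m : ℕ) :
    (glue (b, c)).getD m 0 = if m < b.length then b.getD m 0 + (0 :: c).getD m 0 else 0 :=
  getD_range_map _ _ _

lemma choose_split (q u : ℕ) :
    Nat.choose (q+1+(u+1)) (u+1) = Nat.choose (q+(u+1)) (u+1) + Nat.choose (q+(u+1)) u := by
  have h : Nat.choose ((q+u+1)+1) (u+1) = Nat.choose (q+u+1) u + Nat.choose (q+u+1) (u+1) :=
    Nat.choose_succ_succ _ _
  have e1 : q+1+(u+1) = (q+u+1)+1 := by omega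
  have e2 : q+(u+1) = q+u+1 := by omega
  rw [e1, e2, h]
  omega

lemma glue_mem_Sset (q n k d j i : ℕ) (hk : 1 ≤ k) (hki : k ≤ i) (hj1 : 1 ≤ j) (hjd : j + 1 ≤ d)
    (b c : List ℕ) (hb : b ∈ Sset (q+1) n i (d - j)) (hc : c ∈ Sset (q+2) (i-1) (k-1) j) :
    glue (b, c) ∈ Sset (q+2) n k d := by
  simp only [Sset, Set.mem_setOf_eq, show q + 2 - 1 = q + 1 by omega,
    show q + 1 - 1 = q by omega] at hb hc ⊢
  obtain ⟨⟨hbne, hbpos, hb0, hbO⟩, hbsum, hbn, hbi, hbgen, hbstr⟩ := hb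
  obtain ⟨⟨hcne, hcpos, hc0, hcO⟩, hcsum, hcn, hck, hcgen, hcstr⟩ := hc
  have hLb1 : 1 ≤ b.length := List.length_pos_iff.mpr hbne
  have hLc1 : 1 ≤ c.length := List.length_pos_iff.mpr hcne
  have hiLb : i + 1 ≤ b.length := by omega
  have hLc : c.length ≤ i := by omega
  have hkLc : k ≤ c.length := by omega
  have bU : ∀ m, m < b.length → b.getD m 0 ≤ Nat.choose (q+m) m := by
    intro m hm
    rcases le_or_gt m i with h | h
    · rw [hbgen m h]
    · exact le_of_lt (hbstr m h hm)
  have cU : ∀ m, m < c.length → c.getD m 0 ≤ Nat.choose (q+1+m) m := by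
    intro m hm
    rcases le_or_gt m (k-1) with h | h
    · rw [hcgen m h]
    · exact le_of_lt (hcstr m h hm)
  have cpos : ∀ m, m < c.length → 0 < c.getD m 0 := fun m hm => getD_pos_of_mem hcpos hm
  have bpos : ∀ m, m < b.length → 0 < b.getD m 0 := fun m hm => getD_pos_of_mem hbpos hm
  have hA : ∀ m, (glue (b, c)).getD m 0
      = if m < b.length then b.getD m 0 + (0 :: c).getD m 0 else 0 := glue_getD b c
  have hL : (glue (b, c)).length = b.length := glue_length b c
  refine ⟨⟨?_, ?_, ?_, ?_⟩, ?_, ?_, ?_, ?_, ?_⟩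
  · -- nonempty
    rw [← List.length_pos_iff, hL]; omega
  · -- positive entries
    intro x hx
    simp only [glue, List.mem_map, List.mem_range] at hx
    obtain ⟨m, hm, rfl⟩ := hx
    have := bpos m hm
    omega
  · -- first entry 1
    rw [hA 0, if_pos (by omega), List.getD_cons_zero, hb0]
  · -- O-sequence condition
    intro t ht ht1
    rw [hL] at ht1
    rw [hA (t+1), if_pos ht1, hA t, if_pos (by omega)]
    obtain ⟨u, rfl⟩ : ∃ u, t = u + 1 := ⟨t - 1, by omega⟩
    rw [List.getD_cons_succ, List.getD_cons_succ]
    rcases Nat.lt_or_ge (u+1) c.length with hcase | hcase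
    · -- c_(u+1) exists
      have hu : u < c.length := by omega
      have hgenb : b.getD (u+1) 0 = Nat.choose (q+(u+1)) (u+1) := hbgen _ (by omega)
      rcases Nat.eq_zero_or_pos u with rfl | hu1
      · -- t = 1
        show b.getD 2 0 + c.getD 1 0 ≤ macaulay 1 (b.getD 1 0 + c.getD 0 0)
        have hb1 : b.getD 1 0 = q + 1 := by
          have h := hbgen 1 (by omega)
          rwa [Nat.choose_one_right] at h
        rw [hb1, hc0]
        show b.getD 2 0 + c.getD 1 0 ≤ macaulay 1 (q + 2)
        have hmac : macaulay 1 (q+2) = Nat.choose (q+3) 2 := by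
          have h := macaulay_choose 0 (q+2) (by omega)
          rwa [Nat.choose_one_right] at h
        have hsplit : Nat.choose (q+3) 2 = Nat.choose (q+2) 1 + Nat.choose (q+2) 2 :=
          Nat.choose_succ_succ (q+2) 1
        have hb2 : b.getD 2 0 ≤ Nat.choose (q+2) 2 := bU 2 (by omega)
        have hc1 : c.getD 1 0 ≤ Nat.choose (q+2) 1 := cU 1 hcase
        rw [hmac, hsplit]
        omega
      · -- t = u+1 ≥ 2
        obtain ⟨v, rfl⟩ : ∃ v, u = v + 1 := ⟨u - 1, by omega⟩
        have hgenbt : b.getD (v+1+1) 0 = Nat.choose (q+v+2) (v+1+1) := by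
          have h := hbgen (v+2) (by omega)
          have e : q+(v+2) = q+v+2 := by omega
          rw [e] at h
          exact h
        have hcu : 0 < c.getD (v+1) 0 := cpos _ hu
        have hcuU : c.getD (v+1) 0 ≤ Nat.choose (q+v+2) (v+1) := by
          have h := cU _ hu
          have e : q+1+(v+1) = q+v+2 := by omega
          rwa [e] at h
        have hkey : macaulay (v+1+1) (Nat.choose (q+v+2) (v+1+1) + c.getD (v+1) 0)
            = Nat.choose (q+v+3) (v+1+2) + macaulay (v+1) (c.getD (v+1) 0) := by
          have h := macaulay_key v (q+v+2) (c.getD (v+1) 0) (by omega) hcuU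
          have e : q+v+2+1 = q+v+3 := by omega
          rw [e] at h
          exact h
        have hbtU : b.getD (v+1+1+1) 0 ≤ Nat.choose (q+v+3) (v+1+2) := by
          have h := bU (v+3) (by omega)
          have e : q+(v+3) = q+v+3 := by omega
          rw [e] at h
          exact h
        have hcO' : c.getD (v+1+1) 0 ≤ macaulay (v+1) (c.getD (v+1) 0) :=
          hcO (v+1) (by omega) (by omega)
        rw [hgenbt, hkey]
        omega
    · -- c_(u+1) doesn't exist
      have hcz : c.getD (u+1) 0 = 0 := List.getD_eq_default _ _ hcase
      rw [hcz]
      have hOb : b.getD (u+1+1) 0 ≤ macaulay (u+1) (b.getD (u+1) 0) := hbO (u+1) (by omega) ht1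
      have : macaulay (u+1) (b.getD (u+1) 0) ≤ macaulay (u+1) (b.getD (u+1) 0 + c.getD u 0) :=
        macaulay_mono _ (by omega)
      omega
  · -- sum = d
    have h1 : (glue (b,c)).sum = ∑ m ∈ Finset.range b.length,
        (b.getD m 0 + (0 :: c).getD m 0) := sum_range_map _ _
    rw [h1, Finset.sum_add_distrib]
    have h2 : ∑ m ∈ Finset.range b.length, b.getD m 0 = d - j := by rw [← sum_getD]; exact hbsum
    have h3 : ∑ m ∈ Finset.range b.length, (0 :: c).getD m 0 = j := by
      have hsub : Finset.range (c.length + 1) ⊆ Finset.range b.length := by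
        apply Finset.range_subset_range.mpr; omega
      rw [← Finset.sum_subset hsub (fun x _ hx => List.getD_eq_default _ _ (by
        simp only [List.length_cons]
        simpa using hx))]
      have h4 : (0 :: c).sum = ∑ x ∈ Finset.range (c.length+1), (0 :: c).getD x 0 := by
        have h := sum_getD (0 :: c)
        simpa using h
      rw [← h4]
      simpa using hcsum
    rw [h2, h3]
    omega
  · rw [hL]; exact hbn
  · rw [hL]; omega
  · -- generic up to k
    intro m hm
    rcases Nat.eq_zero_or_pos m with rfl | hm1
    · rw [hA 0, if_pos (by omega), List.getD_cons_zero, hb0]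
      simp
    · obtain ⟨u, rfl⟩ : ∃ u, m = u + 1 := ⟨m - 1, by omega⟩
      rw [hA (u+1), if_pos (by omega), List.getD_cons_succ]
      have hcg : c.getD u 0 = Nat.choose (q+(u+1)) u := by
        have h := hcgen u (by omega)
        have e : q+1+u = q+(u+1) := by omega
        rwa [e] at h
      rw [hbgen (u+1) (by omega), hcg, choose_split q u]
  · -- strict above k
    intro m hm hmL
    rw [hL] at hmL
    obtain ⟨u, rfl⟩ : ∃ u, m = u + 1 := ⟨m - 1, by omega⟩
    rw [hA (u+1), if_pos hmL, List.getD_cons_succ, choose_split q u]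
    rcases le_or_gt (u+1) i with hcase | hcase
    · have hbg : b.getD (u+1) 0 = Nat.choose (q+(u+1)) (u+1) := hbgen _ hcase
      rcases Nat.lt_or_ge u c.length with hu | hu
      · have hcs := hcstr u (by omega) hu
        have e : q+1+u = q+(u+1) := by omega
        rw [e] at hcs
        omega
      · rw [List.getD_eq_default _ _ hu, hbg]
        have hpos : 0 < Nat.choose (q+(u+1)) u := Nat.choose_pos (by omega)
        omega
    · have hbs : b.getD (u+1) 0 < Nat.choose (q+(u+1)) (u+1) := hbstr _ hcase hmL
      have hdef : c.getD u 0 = 0 := List.getD_eq_default _ _ (by omega)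
      rw [hdef]
      have hpos : 0 < Nat.choose (q+(u+1)) u := Nat.choose_pos (by omega)
      omega

lemma glue_inj (q n k d : ℕ) {j i j' i' : ℕ} (hi : 1 ≤ i) (hi' : 1 ≤ i') {b c b' c' : List ℕ}
    (hb : b ∈ Sset (q+1) n i (d - j)) (hc : c ∈ Sset (q+2) (i-1) (k-1) j)
    (hb' : b' ∈ Sset (q+1) n i' (d - j')) (hc' : c' ∈ Sset (q+2) (i'-1) (k-1) j')
    (hg : glue (b, c) = glue (b', c')) : j = j' ∧ i = i' ∧ b = b' ∧ c = c' := by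
  simp only [Sset, Set.mem_setOf_eq, show q + 2 - 1 = q + 1 by omega,
    show q + 1 - 1 = q by omega] at hb hc hb' hc'
  obtain ⟨⟨hbne, hbpos, hb0, hbO⟩, hbsum, hbn, hbi, hbgen, hbstr⟩ := hb
  obtain ⟨⟨hcne, hcpos, hc0, hcO⟩, hcsum, hcn, hck, hcgen, hcstr⟩ := hc
  obtain ⟨⟨hbne', hbpos', hb0', hbO'⟩, hbsum', hbn', hbi', hbgen', hbstr'⟩ := hb'
  obtain ⟨⟨hcne', hcpos', hc0', hcO'⟩, hcsum', hcn', hck', hcgen', hcstr'⟩ := hc'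
  have hLb1 : 1 ≤ b.length := List.length_pos_iff.mpr hbne
  have hLc1 : 1 ≤ c.length := List.length_pos_iff.mpr hcne
  have hLb1' : 1 ≤ b'.length := List.length_pos_iff.mpr hbne'
  have hLc1' : 1 ≤ c'.length := List.length_pos_iff.mpr hcne'
  have hiLb : i + 1 ≤ b.length := by omega
  have hiLb' : i' + 1 ≤ b'.length := by omega
  have hLc : c.length ≤ i := by omega
  have hLc' : c'.length ≤ i' := by omega
  have hlen : b.length = b'.length := by
    have h := congrArg List.length hg
    rwa [glue_length, glue_length] at h
  have hent : ∀ m, m < b.length →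
      b.getD m 0 + (0 :: c).getD m 0 = b'.getD m 0 + (0 :: c').getD m 0 := by
    intro m hm
    have h := congrArg (fun l => l.getD m 0) hg
    simp only [glue_getD] at h
    rwa [if_pos hm, if_pos (by omega)] at h
  have hii : i = i' := by
    by_contra hne
    rcases Nat.lt_or_ge i i' with hlt | hge
    · have h1 : b.getD (i+1) 0 < Nat.choose (q+(i+1)) (i+1) := hbstr (i+1) (by omega) (by omega)
      have h2 : b'.getD (i+1) 0 = Nat.choose (q+(i+1)) (i+1) := hbgen' (i+1) (by omega)
      have hcz : c.getD i 0 = 0 := List.getD_eq_default _ _ hLc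
      have he := hent (i+1) (by omega)
      rw [List.getD_cons_succ, List.getD_cons_succ, hcz, h2] at he
      omega
    · have hlt : i' < i := by omega
      have h1 : b'.getD (i'+1) 0 < Nat.choose (q+(i'+1)) (i'+1) := hbstr' (i'+1) (by omega) (by omega)
      have h2 : b.getD (i'+1) 0 = Nat.choose (q+(i'+1)) (i'+1) := hbgen (i'+1) (by omega)
      have hcz : c'.getD i' 0 = 0 := List.getD_eq_default _ _ hLc'
      have he := hent (i'+1) (by omega)
      rw [List.getD_cons_succ, List.getD_cons_succ, hcz, h2] at he
      omega
  subst hii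
  have hbb : b = b' := by
    apply list_ext_getD _ _ hlen
    intro m hm
    rcases le_or_gt m i with hcase | hcase
    · rw [hbgen m hcase, hbgen' m hcase]
    · obtain ⟨u, rfl⟩ : ∃ u, m = u + 1 := ⟨m - 1, by omega⟩
      have hcz : c.getD u 0 = 0 := List.getD_eq_default _ _ (by omega)
      have hcz' : c'.getD u 0 = 0 := List.getD_eq_default _ _ (by omega)
      have he := hent (u+1) hm
      rw [List.getD_cons_succ, List.getD_cons_succ] at he
      rw [hcz, hcz'] at he
      omega
  subst hbb
  have hcc : c = c' := by
    have hlc : c.length = c'.length := by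
      by_contra hne
      rcases Nat.lt_or_ge c.length c'.length with hlt | hge
      · have he := hent (c.length + 1) (by omega)
        rw [List.getD_cons_succ, List.getD_cons_succ] at he
        have hcz : c.getD c.length 0 = 0 := List.getD_eq_default _ _ le_rfl
        have hcp : 0 < c'.getD c.length 0 := getD_pos_of_mem hcpos' hlt
        rw [hcz] at he
        omega
      · have hlt : c'.length < c.length := by omega
        have he := hent (c'.length + 1) (by omega)
        rw [List.getD_cons_succ, List.getD_cons_succ] at he
        have hcz : c'.getD c'.length 0 = 0 := List.getD_eq_default _ _ le_rfl
        have hcp : 0 < c.getD c'.length 0 := getD_pos_of_mem hcpos hlt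
        rw [hcz] at he
        omega
    apply list_ext_getD _ _ hlc
    intro m hm
    have he := hent (m + 1) (by omega)
    rw [List.getD_cons_succ, List.getD_cons_succ] at he
    omega
  subst hcc
  exact ⟨by omega, rfl, rfl, rfl⟩

lemma exists_glue (q n k d : ℕ) (hk : 1 ≤ k) (a : List ℕ) (ha : a ∈ Sset (q+2) n k d) :
    ∃ j i b c, 1 ≤ j ∧ j + 1 ≤ d ∧ k ≤ i ∧ i ≤ n ∧
      b ∈ Sset (q+1) n i (d - j) ∧ c ∈ Sset (q+2) (i-1) (k-1) j ∧ glue (b, c) = a := by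
  classical
  simp only [Sset, Set.mem_setOf_eq, show q + 2 - 1 = q + 1 by omega] at ha
  obtain ⟨⟨hane, hapos, ha0, haO⟩, hasum, han, hak, hagen, hastr⟩ := ha
  set L := a.length with hLdef
  have hL1 : 1 ≤ L := List.length_pos_iff.mpr hane
  have hkL : k + 1 ≤ L := by omega
  have apos : ∀ m, m < L → 0 < a.getD m 0 := fun m hm => getD_pos_of_mem hapos hm
  have aU : ∀ m, m < L → a.getD m 0 ≤ Nat.choose (q+1+m) m := by
    intro m hm
    rcases le_or_gt m k with h | h
    · rw [hagen m h]
    · exact le_of_lt (hastr m h hm)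
  -- the index i
  set P : ℕ → Prop := fun m => ∀ t ≤ m, Nat.choose (q+t) t ≤ a.getD t 0 with hPdef
  have hPk : P k := by
    intro t ht
    rw [hagen t ht]
    exact Nat.choose_le_choose t (by omega)
  set i := Nat.findGreatest P (L-1) with hidef
  have hik : k ≤ i := Nat.le_findGreatest (by omega) hPk
  have hiL : i ≤ L - 1 := Nat.findGreatest_le _
  have hPi : P i := Nat.findGreatest_spec (m := k) (by omega) hPk
  have hi1 : 1 ≤ i := by omega
  -- strictly-below-generic after i
  have hAfter : ∀ m, i < m → m < L → a.getD m 0 < Nat.choose (q+m) m := by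
    have base : i + 1 < L → a.getD (i+1) 0 < Nat.choose (q+(i+1)) (i+1) := by
      intro h
      by_contra hge
      push_neg at hge
      have hnot : ¬ P (i+1) := Nat.findGreatest_is_greatest (n := L-1) (by omega) (by omega)
      apply hnot
      intro t ht
      rcases le_or_gt t i with h1 | h1
      · exact hPi t h1
      · have : t = i + 1 := by omega
        subst this; exact hge
    have step : ∀ m, 1 ≤ m → m + 1 < L → a.getD m 0 < Nat.choose (q+m) m →
        a.getD (m+1) 0 < Nat.choose (q+(m+1)) (m+1) := by
      intro m hm1 hmL hlt
      obtain ⟨u, rfl⟩ : ∃ u, m = u + 1 := ⟨m - 1, by omega⟩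
      have h1 : a.getD (u+1+1) 0 ≤ macaulay (u+1) (a.getD (u+1) 0) := haO (u+1) (by omega) hmL
      have h2 : macaulay (u+1) (a.getD (u+1) 0) < macaulay (u+1) (Nat.choose (q+(u+1)) (u+1)) :=
        macaulay_strictMono _ hlt
      have h3 : macaulay (u+1) (Nat.choose (q+(u+1)) (u+1)) = Nat.choose (q+(u+1)+1) (u+1+1) :=
        macaulay_choose u (q+(u+1)) (by omega)
      have e : q+(u+1)+1 = q+(u+1+1) := by omega
      rw [h3, e] at h2
      omega
    have ind : ∀ w, i+1+w < L → a.getD (i+1+w) 0 < Nat.choose (q+(i+1+w)) (i+1+w) := by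
      intro w
      induction w with
      | zero => intro h; exact base h
      | succ w ih =>
        intro h
        have h1 := ih (by omega)
        have h2 := step (i+1+w) (by omega) (by omega) h1
        have e : i+1+w+1 = i+1+(w+1) := by omega
        rwa [e] at h2
    intro m hm hmL
    have h := ind (m - i - 1) (by omega)
    have e : i+1+(m-i-1) = m := by omega
    rwa [e] at h
  -- the index r
  set Q : ℕ → Prop := fun m => ∀ t, 1 ≤ t → t ≤ m → Nat.choose (q+t) t < a.getD t 0 with hQdef
  have hQk : Q k := by
    intro t ht1 htk
    obtain ⟨u, rfl⟩ : ∃ u, t = u + 1 := ⟨t - 1, by omega⟩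
    rw [hagen (u+1) htk, choose_split q u]
    have : 0 < Nat.choose (q+(u+1)) u := Nat.choose_pos (by omega)
    omega
  set r := Nat.findGreatest Q i with hrdef
  have hrk : k ≤ r := Nat.le_findGreatest hik hQk
  have hri : r ≤ i := Nat.findGreatest_le _
  have hQr : Q r := Nat.findGreatest_spec (m := k) hik hQk
  have hr1 : 1 ≤ r := by omega
  -- exactly-generic between r and i
  have hMid : ∀ m, r < m → m ≤ i → a.getD m 0 = Nat.choose (q+m) m := by
    have base : r + 1 ≤ i → a.getD (r+1) 0 = Nat.choose (q+(r+1)) (r+1) := by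
      intro h
      have hnot : ¬ Q (r+1) := Nat.findGreatest_is_greatest (n := i) (by omega) h
      have hle : a.getD (r+1) 0 ≤ Nat.choose (q+(r+1)) (r+1) := by
        by_contra hgt
        push_neg at hgt
        apply hnot
        intro t ht1 htr
        rcases le_or_gt t r with h1 | h1
        · exact hQr t ht1 h1
        · have : t = r + 1 := by omega
          subst this; exact hgt
      have hge := hPi (r+1) (by omega)
      omega
    have step : ∀ m, 1 ≤ m → m + 1 ≤ i → a.getD m 0 = Nat.choose (q+m) m →
        a.getD (m+1) 0 = Nat.choose (q+(m+1)) (m+1) := by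
      intro m hm1 hmi heq
      obtain ⟨u, rfl⟩ : ∃ u, m = u + 1 := ⟨m - 1, by omega⟩
      have h1 : a.getD (u+1+1) 0 ≤ macaulay (u+1) (a.getD (u+1) 0) :=
        haO (u+1) (by omega) (by omega)
      have hmc : macaulay (u+1) (Nat.choose (q+(u+1)) (u+1)) = Nat.choose (q+(u+1)+1) (u+1+1) :=
        macaulay_choose u (q+(u+1)) (by omega)
      rw [heq, hmc] at h1
      have hge := hPi (u+1+1) (by omega)
      have e : q+(u+1)+1 = q+(u+1+1) := by omega
      rw [e] at h1
      omega
    have ind : ∀ w, r+1+w ≤ i → a.getD (r+1+w) 0 = Nat.choose (q+(r+1+w)) (r+1+w) := by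
      intro w
      induction w with
      | zero => intro h; exact base h
      | succ w ih =>
        intro h
        have h2 := step (r+1+w) (by omega) (by omega) (ih (by omega))
        have e : r+1+w+1 = r+1+(w+1) := by omega
        rwa [e] at h2
    intro m hm hmi
    have h := ind (m - r - 1) (by omega)
    have e : r+1+(m-r-1) = m := by omega
    rwa [e] at h
  -- define b and c
  set E : ℕ → ℕ := fun m => if m ≤ i then Nat.choose (q+m) m else a.getD m 0 with hEdef
  set F : ℕ → ℕ := fun m => a.getD (m+1) 0 - Nat.choose (q+(m+1)) (m+1) with hFdef
  set b : List ℕ := (List.range L).map E with hbdef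
  set c : List ℕ := (List.range r).map F with hcdef
  have hbL : b.length = L := by simp [hbdef]
  have hcL : c.length = r := by simp [hcdef]
  have hbget : ∀ m, b.getD m 0 = if m < L then E m else 0 := fun m => getD_range_map E L m
  have hcget : ∀ m, c.getD m 0 = if m < r then F m else 0 := fun m => getD_range_map F r m
  have hc0 : c.getD 0 0 = 1 := by
    rw [hcget 0, if_pos (by omega), hFdef]
    have h1 : a.getD 1 0 = q + 2 := by
      have h := hagen 1 hk
      rwa [show q+1+1 = q+2 by omega, Nat.choose_one_right] at h
    simp only []
    rw [show q+(0+1) = q+1 by omega, Nat.choose_one_right, h1]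
    omega
  have hFpos : ∀ m, m < r → 0 < F m := by
    intro m hm
    have := hQr (m+1) (by omega) (by omega)
    simp only [hFdef]
    omega
  -- pointwise decomposition
  have hpoint : ∀ m, m < L → a.getD m 0 = E m + (0 :: c).getD m 0 := by
    intro m hm
    rcases Nat.eq_zero_or_pos m with rfl | hm1
    · rw [List.getD_cons_zero, hEdef]
      simp only [if_pos (show 0 ≤ i by omega)]
      rw [ha0, Nat.choose_zero_right]
    · obtain ⟨u, rfl⟩ : ∃ u, m = u + 1 := ⟨m - 1, by omega⟩
      rw [List.getD_cons_succ, hcget u]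
      rcases Nat.lt_or_ge u r with hu | hu
      · rw [if_pos hu]
        have hle := hPi (u+1) (by omega)
        have e1 : E (u+1) = Nat.choose (q+(u+1)) (u+1) := if_pos (by omega)
        rw [e1, hFdef]
        simp only []
        omega
      · rw [if_neg (by omega)]
        rcases le_or_gt (u+1) i with hui | hui
        · have := hMid (u+1) (by omega) hui
          have e1 : E (u+1) = Nat.choose (q+(u+1)) (u+1) := if_pos hui
          rw [e1, this]
          omega
        · have e1 : E (u+1) = a.getD (u+1) 0 := if_neg (by omega)
          rw [e1]
          omega
  -- glue equality
  have hglue : glue (b, c) = a := by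
    apply list_ext_getD
    · rw [glue_length, hbL]
    · intro m hm
      rw [glue_length, hbL] at hm
      rw [glue_getD, hbL, if_pos hm, hbget m, if_pos hm, ← hpoint m hm]
  -- sum split
  have hsum_split : b.sum + c.sum = d := by
    have h1 : b.sum = ∑ m ∈ Finset.range L, E m := sum_range_map E L
    have h2 : a.sum = ∑ m ∈ Finset.range L, a.getD m 0 := by rw [sum_getD]
    have h3 : ∑ m ∈ Finset.range L, a.getD m 0
        = ∑ m ∈ Finset.range L, (E m + (0 :: c).getD m 0) := by
      apply Finset.sum_congr rfl
      intro m hm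
      exact hpoint m (Finset.mem_range.mp hm)
    have h4 : ∑ m ∈ Finset.range L, (0 :: c).getD m 0 = c.sum := by
      have hsub : Finset.range (c.length + 1) ⊆ Finset.range L := by
        apply Finset.range_subset_range.mpr
        rw [hcL]; omega
      rw [← Finset.sum_subset hsub (fun x _ hx => List.getD_eq_default _ _ (by
        simp only [List.length_cons]
        simpa using hx))]
      have h5 : (0 :: c).sum = ∑ x ∈ Finset.range (c.length+1), (0 :: c).getD x 0 := by
        have h := sum_getD (0 :: c)
        simpa using h
      rw [← h5]
      simp
    rw [h1, ← h4, ← Finset.sum_add_distrib, ← h3, ← h2, hasum]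
  have hcsum_pos : 1 ≤ c.sum := by
    have h1 : c.sum = ∑ m ∈ Finset.range r, F m := sum_range_map F r
    have h2 : F 0 ≤ ∑ m ∈ Finset.range r, F m :=
      Finset.single_le_sum (fun x _ => Nat.zero_le (F x)) (Finset.mem_range.mpr (by omega))
    have h3 : 0 < F 0 := hFpos 0 (by omega)
    omega
  have hbsum_pos : 1 ≤ b.sum := by
    have h1 : b.sum = ∑ m ∈ Finset.range L, E m := sum_range_map E L
    have h2 : E 0 ≤ ∑ m ∈ Finset.range L, E m :=
      Finset.single_le_sum (fun x _ => Nat.zero_le (E x)) (Finset.mem_range.mpr (by omega))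
    have h3 : E 0 = 1 := by
      rw [hEdef]; simp only [if_pos (show 0 ≤ i by omega)]; rw [Nat.choose_zero_right]
    omega
  refine ⟨c.sum, i, b, c, hcsum_pos, by omega, hik, by omega, ?_, ?_, hglue⟩
  · -- b ∈ Sset (q+1) n i (d - c.sum)
    simp only [Sset, Set.mem_setOf_eq, show q + 1 - 1 = q by omega]
    refine ⟨⟨?_, ?_, ?_, ?_⟩, by omega, by rw [hbL]; omega, by rw [hbL]; omega, ?_, ?_⟩
    · rw [← List.length_pos_iff, hbL]; omega
    · intro x hx
      simp only [hbdef, List.mem_map, List.mem_range] at hx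
      obtain ⟨m, hm, rfl⟩ := hx
      rw [hEdef]
      simp only []
      split_ifs with h
      · exact Nat.choose_pos (by omega)
      · exact apos m hm
    · rw [hbget 0, if_pos (by omega)]
      rw [hEdef]; simp only [if_pos (show 0 ≤ i by omega)]; rw [Nat.choose_zero_right]
    · -- O-condition for b
      intro t ht ht1
      rw [hbL] at ht1
      rw [hbget (t+1), if_pos ht1, hbget t, if_pos (by omega)]
      obtain ⟨u, rfl⟩ : ∃ u, t = u + 1 := ⟨t - 1, by omega⟩
      rcases le_or_gt (u+1+1) i with hcase | hcase
      · have e1 : E (u+1+1) = Nat.choose (q+(u+1+1)) (u+1+1) := if_pos hcase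
        have e2 : E (u+1) = Nat.choose (q+(u+1)) (u+1) := if_pos (by omega)
        have hmc : macaulay (u+1) (Nat.choose (q+(u+1)) (u+1))
            = Nat.choose (q+(u+1)+1) (u+1+1) := macaulay_choose u (q+(u+1)) (by omega)
        rw [e1, e2, hmc]
        have e : q+(u+1)+1 = q+(u+1+1) := by omega
        rw [e]
      · rcases le_or_gt (u+1) i with hcase2 | hcase2
        · have e1 : E (u+1+1) = a.getD (u+1+1) 0 := if_neg (by omega)
          have e2 : E (u+1) = Nat.choose (q+(u+1)) (u+1) := if_pos hcase2
          have hmc : macaulay (u+1) (Nat.choose (q+(u+1)) (u+1))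
              = Nat.choose (q+(u+1)+1) (u+1+1) := macaulay_choose u (q+(u+1)) (by omega)
          rw [e1, e2, hmc]
          have h := hAfter (u+1+1) (by omega) ht1
          have e : q+(u+1)+1 = q+(u+1+1) := by omega
          rw [e]
          omega
        · have e1 : E (u+1+1) = a.getD (u+1+1) 0 := if_neg (by omega)
          have e2 : E (u+1) = a.getD (u+1) 0 := if_neg (by omega)
          rw [e1, e2]
          exact haO (u+1) (by omega) ht1
    · -- generic for b
      intro m hm
      rw [hbget m, if_pos (by omega), hEdef]
      simp only [if_pos hm]
    · -- strict for b
      intro m hm hmL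
      rw [hbL] at hmL
      rw [hbget m, if_pos hmL, hEdef]
      simp only [if_neg (show ¬ m ≤ i by omega)]
      exact hAfter m hm hmL
  · -- c ∈ Sset (q+2) (i-1) (k-1) c.sum
    refine ⟨⟨?_, ?_, hc0, ?_⟩, rfl, by rw [hcL]; omega, by rw [hcL]; omega, ?_, ?_⟩
    · rw [← List.length_pos_iff, hcL]; omega
    · intro x hx
      simp only [hcdef, List.mem_map, List.mem_range] at hx
      obtain ⟨m, hm, rfl⟩ := hx
      exact hFpos m hm
    · -- O-condition for c
      intro t ht ht1
      rw [hcL] at ht1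
      rw [hcget (t+1), if_pos ht1, hcget t, if_pos (by omega)]
      obtain ⟨u, rfl⟩ : ∃ u, t = u + 1 := ⟨t - 1, by omega⟩
      have hlow : Nat.choose (q+(u+1+1)) (u+1+1) < a.getD (u+1+1) 0 :=
        hQr (u+1+1) (by omega) (by omega)
      have hup : a.getD (u+1+1) 0 ≤ Nat.choose (q+1+(u+1+1)) (u+1+1) := aU (u+1+1) (by omega)
      have hsplit : Nat.choose (q+1+(u+1+1)) (u+1+1)
          = Nat.choose (q+(u+1+1)) (u+1+1) + Nat.choose (q+(u+1+1)) (u+1) := choose_split q (u+1)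
      have hFle : F (u+1) ≤ Nat.choose (q+(u+1+1)) (u+1) := by
        simp only [hFdef]; omega
      have hFeq : a.getD (u+1+1) 0 = Nat.choose (q+(u+1+1)) (u+1+1) + F (u+1) := by
        simp only [hFdef]; omega
      have hkey : macaulay (u+1+1) (Nat.choose (q+(u+1+1)) (u+1+1) + F (u+1))
          = Nat.choose (q+(u+1+1)+1) (u+1+2) + macaulay (u+1) (F (u+1)) := by
        have h := macaulay_key u (q+u+2) (F (u+1)) (by omega) (by
          have e : q+(u+1+1) = q+u+2 := by omega
          rwa [e] at hFle)
        have e : q+(u+1+1) = q+u+2 := by omega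
        rw [e]
        have e2 : q+u+2+1 = q+u+3 := by omega
        rw [e2]
        exact h
      have hOa : a.getD (u+1+1+1) 0 ≤ macaulay (u+1+1) (a.getD (u+1+1) 0) :=
        haO (u+1+1) (by omega) (by omega)
      rw [hFeq, hkey] at hOa
      have hFsucc : F (u+1+1) = a.getD (u+1+1+1) 0 - Nat.choose (q+(u+1+1+1)) (u+1+2) := rfl
      rw [hFsucc]
      have e3 : q+(u+1+1+1) = q+(u+1+1)+1 := by omega
      rw [e3]
      omega
    · -- generic for c
      intro m hm
      show c.getD m 0 = Nat.choose (q+1+m) m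
      rw [hcget m, if_pos (by omega), hFdef]
      simp only []
      have hag : a.getD (m+1) 0 = Nat.choose (q+1+(m+1)) (m+1) := hagen (m+1) (by omega)
      rw [hag, choose_split q m]
      have e : q+1+m = q+(m+1) := by omega
      rw [e]
      omega
    · -- strict for c
      intro m hm hmr
      rw [hcL] at hmr
      show c.getD m 0 < Nat.choose (q+1+m) m
      rw [hcget m, if_pos hmr, hFdef]
      simp only []
      have hlt : a.getD (m+1) 0 < Nat.choose (q+1+(m+1)) (m+1) := hastr (m+1) (by omega) (by omega)
      rw [choose_split q m] at hlt
      have hge := hPi (m+1) (by omega)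
      have e2 : q+1+m = q+(m+1) := by omega
      rw [e2]
      omega

lemma length_le_sum_of_pos {l : List ℕ} (h : ∀ x ∈ l, 0 < x) : l.length ≤ l.sum := by
  induction l with
  | nil => simp
  | cons x t ih =>
    simp only [List.length_cons, List.sum_cons]
    have h1 := h x (by simp)
    have h2 := ih (fun y hy => h y (by simp [hy]))
    omega

lemma Sset_finite (p n k d : ℕ) : (Sset p n k d).Finite := by
  apply Set.Finite.subset (finite_bdd_lists d d)
  rintro l ⟨⟨hne, hpos, h0, hO⟩, hsum, -⟩
  refine ⟨?_, ?_⟩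
  · rw [← hsum]; exact length_le_sum_of_pos hpos
  · intro x hx
    rw [← hsum]
    exact List.single_le_sum (fun y _ => Nat.zero_le y) x hx

theorem numOCond_iterative_formula' (q n k d : ℕ) (hk : 1 ≤ k) (hd : 1 ≤ d) :
    (Sset (q+2) n k d).ncard = ∑ x ∈ Finset.Icc 1 (d - 1) ×ˢ Finset.Icc k n,
      (Sset (q+1) n x.2 (d - x.1)).ncard * (Sset (q+2) (x.2-1) (k-1) x.1).ncard := by
  classical
  set QF := Finset.Icc 1 (d-1) ×ˢ Finset.Icc k n with hQF
  have hB : ∀ x : ℕ×ℕ, (Sset (q+1) n x.2 (d-x.1)).Finite := fun x => Sset_finite _ _ _ _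
  have hC : ∀ x : ℕ×ℕ, (Sset (q+2) (x.2-1) (k-1) x.1).Finite := fun x => Sset_finite _ _ _ _
  have hT : ∀ x : ℕ×ℕ,
      (glue '' (Sset (q+1) n x.2 (d-x.1) ×ˢ Sset (q+2) (x.2-1) (k-1) x.1)).Finite :=
    fun x => ((hB x).prod (hC x)).image _
  have hS : (Sset (q+2) n k d).Finite := Sset_finite _ _ _ _
  have hunion : hS.toFinset = QF.biUnion (fun x => (hT x).toFinset) := by
    ext a
    simp only [Set.Finite.mem_toFinset, Finset.mem_biUnion]
    constructor
    · intro ha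
      obtain ⟨j, i, b, c, hj1, hjd, hki, hin, hb, hc, hgl⟩ := exists_glue q n k d hk a ha
      refine ⟨(j, i), ?_, ?_⟩
      · rw [hQF, Finset.mem_product]
        simp only [Finset.mem_Icc]
        omega
      · exact ⟨(b, c), ⟨hb, hc⟩, hgl⟩
    · rintro ⟨x, hx, hax⟩
      obtain ⟨⟨b, c⟩, ⟨hb, hc⟩, rfl⟩ := hax
      rw [hQF, Finset.mem_product] at hx
      simp only [Finset.mem_Icc] at hx
      exact glue_mem_Sset q n k d x.1 x.2 hk (by omega) (by omega) (by omega) b c hb hc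
  have hdisj : ∀ x ∈ QF, ∀ y ∈ QF, x ≠ y → Disjoint ((hT x).toFinset) ((hT y).toFinset) := by
    intro x hx y hy hne
    rw [Finset.disjoint_left]
    intro a hax hay
    rw [Set.Finite.mem_toFinset] at hax hay
    obtain ⟨⟨b, c⟩, ⟨hb, hc⟩, hgl⟩ := hax
    obtain ⟨⟨b', c'⟩, ⟨hb', hc'⟩, hgl'⟩ := hay
    rw [hQF, Finset.mem_product] at hx hy
    simp only [Finset.mem_Icc] at hx hy
    obtain ⟨hj, hi, -, -⟩ :=
      glue_inj q n k d (by omega) (by omega) hb hc hb' hc' (by rw [hgl, hgl'])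
    exact hne (Prod.ext hj hi)
  calc (Sset (q+2) n k d).ncard = hS.toFinset.card := Set.ncard_eq_toFinset_card _ hS
    _ = ∑ x ∈ QF, ((hT x).toFinset).card := by rw [hunion, Finset.card_biUnion hdisj]
    _ = ∑ x ∈ QF, (Sset (q+1) n x.2 (d - x.1)).ncard * (Sset (q+2) (x.2-1) (k-1) x.1).ncard := by
        apply Finset.sum_congr rfl
        intro x hx
        rw [hQF, Finset.mem_product] at hx
        simp only [Finset.mem_Icc] at hx
        have hinj : Set.InjOn glue (Sset (q+1) n x.2 (d-x.1) ×ˢ Sset (q+2) (x.2-1) (k-1) x.1) := by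
          rintro ⟨b, c⟩ ⟨hb, hc⟩ ⟨b', c'⟩ ⟨hb', hc'⟩ hgl
          obtain ⟨-, -, hbb, hcc⟩ :=
            glue_inj q n k d (by omega) (by omega) hb hc hb' hc' hgl
          rw [Prod.ext_iff]
          exact ⟨hbb, hcc⟩
        rw [← Set.ncard_eq_toFinset_card _ (hT x), Set.ncard_image_of_injOn hinj,
          Set.ncard_eq_toFinset_card _ ((hB x).prod (hC x)),
          Set.ncard_eq_toFinset_card _ (hB x), Set.ncard_eq_toFinset_card _ (hC x),
          ← Set.Finite.toFinset_prod, Finset.card_product]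

/-- For all `p ≥ 2`, `n ≥ 0`, `k ≥ 1`, `d ≥ 1`:
`O(p,n,k,d) = Σ_{j=1}^{d-1} Σ_{i=k}^{n} O(p-1,n,i,d-j) · O(p,i-1,k-1,j)`. -/
theorem numOCond_iterative_formula (p n k d : ℕ) (hp : 2 ≤ p) (hk : 1 ≤ k)
    (hd : 1 ≤ d) :
    numOCond p n k d = ∑ j ∈ Finset.Icc 1 (d - 1), ∑ i ∈ Finset.Icc k n,
      numOCond (p - 1) n i (d - j) * numOCond p (i - 1) (k - 1) j := by
  obtain ⟨q, rfl⟩ : ∃ q, p = q + 2 := ⟨p - 2, by omega⟩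
  have h1 : ∑ j ∈ Finset.Icc 1 (d - 1), ∑ i ∈ Finset.Icc k n,
      numOCond (q + 2 - 1) n i (d - j) * numOCond (q + 2) (i - 1) (k - 1) j
      = ∑ x ∈ Finset.Icc 1 (d - 1) ×ˢ Finset.Icc k n,
        (Sset (q+1) n x.2 (d - x.1)).ncard * (Sset (q+2) (x.2-1) (k-1) x.1).ncard := by
    rw [Finset.sum_product]
    rfl
  rw [h1]
  exact numOCond_iterative_formula' q n k d hk hd
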